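/- arXiv:1611.03739 — 3 statements merged into one kernel-verified Lean document; each statement's English description precedes it below -/
import Mathlib

section
/- Let G be a finite simple graph with a linear ordering π of its vertices such that every cut of π has at most w edges (i.e., G has cutwidth at most w witnessed by π), and let v be a vertex of G with at least one neighbor. Then the induced subgraph G[N(v)] on the open neighborhood of v has cutwidth at most w − 1. -/
open SimpleGraph

/-- The cut of the linear layout `π` at position `i`: all edges with one endpoint
laid out at position at most `i` and the other at a position greater than `i`. -/
def cutAt {V : Type*} (G : SimpleGraph V) (π : V → ℕ) (i : ℕ) : Set (Sym2 V) :=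
  {e | e ∈ G.edgeSet ∧ ∃ u v : V, e = s(u, v) ∧ π u ≤ i ∧ i < π v}

/-- `G` has cutwidth at most `w`: some linear ordering of the vertices has all
of its cuts of size at most `w`. -/
def CutwidthLE {V : Type*} [Fintype V] (G : SimpleGraph V) (w : ℕ) : Prop :=
  ∃ π : V ≃ Fin (Fintype.card V), ∀ i : ℕ, (cutAt G (fun v => (π v : ℕ)) i).ncard ≤ w

/-- part of Proposition 3.1 of the paper.  If `G` has a linear
ordering witnessing cutwidth at most `w` and `v` is a vertex with at least one
neighbor, then the subgraph induced on the open neighborhood of `v` has cutwidth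
at most `w - 1`. -/
theorem cutwidth_induce_neighborSet_lt
    {V : Type*} [Fintype V] [DecidableEq V] (G : SimpleGraph V) [DecidableRel G.Adj]
    (w : ℕ) (π : V ≃ Fin (Fintype.card V))
    (hπ : ∀ i : ℕ, (cutAt G (fun v => (π v : ℕ)) i).ncard ≤ w)
    (v : V) (hv : (G.neighborSet v).Nonempty) :
    CutwidthLE (G.induce (G.neighborSet v)) (w - 1) := by
  classical
  set S := G.neighborSet v with hS
  letI : LinearOrder ↥S :=
    LinearOrder.lift' (fun a => π (a : V)) (fun a b h => Subtype.ext (π.injective h))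
  have hle : ∀ x y : ↥S, x ≤ y ↔ ((π (x : V) : ℕ) ≤ (π (y : V) : ℕ)) := fun x y => Iff.rfl
  have hlt : ∀ x y : ↥S, x < y ↔ ((π (x : V) : ℕ) < (π (y : V) : ℕ)) := fun x y => Iff.rfl
  set n := Fintype.card ↥S with hn
  have σ : ↥S ≃o Fin n := (monoEquivOfFin ↥S rfl).symm
  refine ⟨σ.toEquiv, ?_⟩
  intro i
  show (cutAt (G.induce S) (fun a => ((σ a : Fin n) : ℕ)) i).ncard ≤ w - 1
  rcases Set.eq_empty_or_nonempty
      (cutAt (G.induce S) (fun a => ((σ a : Fin n) : ℕ)) i) with h | ⟨e, he⟩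
  · simp [h]
  obtain ⟨hedge, a, b, hEab, hai, hib⟩ := he
  have hi : i < n := lt_trans hib (σ b).isLt
  set j : Fin n := ⟨i, hi⟩ with hj
  set m : V := (σ.symm j : V) with hm
  set α : ℕ := (π m : ℕ) with hα
  -- position/value translation
  have hx : ∀ x : ↥S, ((σ x : ℕ) ≤ i ↔ (π (x : V) : ℕ) ≤ α) := by
    intro x
    have h1 : ((σ x : ℕ) ≤ i) ↔ σ x ≤ j := Iff.rfl
    rw [h1, ← OrderIso.le_symm_apply, hle]
  have hy : ∀ y : ↥S, (i < (σ y : ℕ) ↔ α < (π (y : V) : ℕ)) := by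
    intro y
    have h1 : (i < (σ y : ℕ)) ↔ j < σ y := Iff.rfl
    rw [h1, ← σ.symm.lt_iff_lt, σ.symm_apply_apply, hlt]
  -- the image of the induced cut inside the big cut
  set I : Set (Sym2 V) :=
    Sym2.map (Subtype.val) '' (cutAt (G.induce S) (fun a => ((σ a : Fin n) : ℕ)) i) with hI
  have hIsub : I ⊆ cutAt G (fun u => (π u : ℕ)) α := by
    rintro _ ⟨e', ⟨he'1, x, y, rfl, hxle, hylt⟩, rfl⟩
    have hadj : (G.induce S).Adj x y := he'1
    have hadj' : G.Adj (x : V) (y : V) := hadj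
    refine ⟨?_, (x : V), (y : V), by simp [Sym2.map_pair_eq], (hx x).1 hxle, (hy y).1 hylt⟩
    exact G.mem_edgeSet.2 hadj'
  -- injectivity and finiteness facts
  have hinj : Function.Injective (Sym2.map (Subtype.val : ↥S → V)) :=
    Sym2.map.injective Subtype.val_injective
  have hIcard : I.ncard = (cutAt (G.induce S) (fun a => ((σ a : Fin n) : ℕ)) i).ncard :=
    Set.ncard_image_of_injective _ hinj
  have hvS : v ∉ S := fun hvv => G.irrefl hvv
  have hvI : ∀ e₀ ∈ I, v ∉ e₀ := by
    rintro _ ⟨e', _, rfl⟩ hmem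
    obtain ⟨x, _, hxv⟩ := Sym2.mem_map.1 hmem
    exact hvS (hxv ▸ x.2)
  -- the extra edge incident to `v`
  have hab : ∀ x : ↥S, G.Adj v (x : V) := fun x => x.2
  have hextra : ∃ e₀ ∈ cutAt G (fun u => (π u : ℕ)) α, v ∈ e₀ := by
    by_cases hc : (π v : ℕ) ≤ α
    · refine ⟨s(v, (b : V)), ⟨G.mem_edgeSet.2 (hab b), v, (b : V), rfl, hc, (hy b).1 hib⟩, ?_⟩
      exact Sym2.mem_mk_left _ _
    · refine ⟨s((a : V), v), ⟨G.mem_edgeSet.2 (hab a).symm, (a : V), v, rfl, (hx a).1 hai,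
        lt_of_not_ge hc⟩, ?_⟩
      exact Sym2.mem_mk_right _ _
  obtain ⟨e₀, he₀, hve₀⟩ := hextra
  have he₀I : e₀ ∉ I := fun h => hvI e₀ h hve₀
  have hIfin : I.Finite := Set.toFinite _
  have hsub : insert e₀ I ⊆ cutAt G (fun u => (π u : ℕ)) α := by
    rintro e' (rfl | he')
    · exact he₀
    · exact hIsub he'
  have hcard : I.ncard + 1 ≤ (cutAt G (fun u => (π u : ℕ)) α).ncard := by
    have h1 : (insert e₀ I).ncard = I.ncard + 1 := Set.ncard_insert_of_notMem he₀I hIfin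
    have h2 : (insert e₀ I).ncard ≤ (cutAt G (fun u => (π u : ℕ)) α).ncard :=
      Set.ncard_le_ncard hsub (Set.toFinite _)
    omega
  have := hπ α
  omega
end

section
/- Let G be a finite simple graph whose vertices are colored with colors {1,…,k} for k ≥ 3. Then G contains a simple path v₁,…,v_k using exactly one vertex of each color (a multicolored path of length k) if and only if there exist vertices v₁,v₂,v₃ forming a path with pairwise distinct colors such that the graph G' obtained from G by deleting all vertices other than v₂, v₃ colored with col(v₁), col(v₂), or col(v₃), and deleting all edges incident to v₂ except {v₂,v₃}, contains a multicolored path on the remaining k−1 colors. -/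
open SimpleGraph

/-- The graph `G'` obtained from a `k`-colored graph `G` (for a triple `v₁, v₂, v₃`)
by deleting every vertex other than `v₂, v₃` whose color is one of
`col v₁, col v₂, col v₃`, and deleting every edge incident to `v₂` except `{v₂, v₃}`. -/
def branchGraph {V : Type*} {k : ℕ} (G : SimpleGraph V) (col : V → Fin k)
    (v₁ v₂ v₃ : V) :
    SimpleGraph {u : V // u = v₂ ∨ u = v₃ ∨
      (col u ≠ col v₁ ∧ col u ≠ col v₂ ∧ col u ≠ col v₃)} where
  Adj a b := G.Adj a.1 b.1 ∧ (a.1 = v₂ → b.1 = v₃) ∧ (b.1 = v₂ → a.1 = v₃)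
  symm := ⟨fun a b h => ⟨h.1.symm, h.2.2, h.2.1⟩⟩
  loopless := ⟨fun a h => G.ne_of_adj h.1 rfl⟩

/-- In a path, a vertex all of whose neighbours equal a single vertex `y₀`
must be an endpoint. -/
lemma path_endpoint_of_unique_nbr {V : Type*} {G : SimpleGraph V} {x y₀ : V}
    (hx : ∀ y, G.Adj x y → y = y₀) :
    ∀ {u w : V} (p : G.Walk u w), p.IsPath → x ∈ p.support → x = u ∨ x = w := by
  intro u w p
  induction p with
  | nil => intro _ hm; simp at hm; exact Or.inl hm
  | @cons u a w h q ih =>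
    intro hp hm
    rw [Walk.support_cons, List.mem_cons] at hm
    rcases hm with rfl | hm'
    · exact Or.inl rfl
    · have hq : q.IsPath := hp.of_cons
      have hu : u ∉ q.support := ((Walk.cons_isPath_iff h q).mp hp).2
      rcases ih hq hm' with rfl | rfl
      · -- x = a
        have huy : u = y₀ := hx u h.symm
        cases q with
        | nil => exact Or.inr rfl
        | @cons a b w h' q' =>
          exfalso
          have hby : b = y₀ := hx b h'
          apply hu
          rw [huy, ← hby]
          simp
      · exact Or.inr rfl

/-- Lift a walk of `G` whose vertices and darts respect the restrictions to a
walk of `branchGraph`. -/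
lemma liftWalk {V : Type*} {k : ℕ} (G : SimpleGraph V) (col : V → Fin k)
    (v₁ v₂ v₃ : V) :
    ∀ {a b : V} (q : G.Walk a b)
      (ha : a = v₂ ∨ a = v₃ ∨ (col a ≠ col v₁ ∧ col a ≠ col v₂ ∧ col a ≠ col v₃))
      (hb : b = v₂ ∨ b = v₃ ∨ (col b ≠ col v₁ ∧ col b ≠ col v₂ ∧ col b ≠ col v₃))
      (hsup : ∀ x ∈ q.support,
        x = v₂ ∨ x = v₃ ∨ (col x ≠ col v₁ ∧ col x ≠ col v₂ ∧ col x ≠ col v₃))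
      (hd : ∀ d ∈ q.darts, (d.toProd.1 = v₂ → d.toProd.2 = v₃) ∧
        (d.toProd.2 = v₂ → d.toProd.1 = v₃)),
      ∃ q' : (branchGraph G col v₁ v₂ v₃).Walk ⟨a, ha⟩ ⟨b, hb⟩,
        q'.support.map Subtype.val = q.support := by
  intro a b q
  induction q with
  | nil => intro ha hb _ _; exact ⟨Walk.nil, rfl⟩
  | @cons a c b h r ih =>
    intro ha hb hsup hd
    have hc : c = v₂ ∨ c = v₃ ∨ (col c ≠ col v₁ ∧ col c ≠ col v₂ ∧ col c ≠ col v₃) :=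
      hsup c (by simp)
    obtain ⟨r', hr'⟩ := ih hc hb (fun x hx => hsup x (by simp [hx]))
      (fun d hd' => hd d (by simp [hd']))
    have hdart := hd ⟨(a, c), h⟩ (by simp [Walk.darts_cons])
    refine ⟨Walk.cons ⟨h, hdart.1, hdart.2⟩ r', ?_⟩
    exact congrArg (List.cons a) hr'

/-- the parameter-decreasing branching rule of Proposition 3.5 of
the paper.  A `k`-colored graph `G` (`k ≥ 3`) has a multicolored path on all `k`
colors iff there are vertices `v₁, v₂, v₃` forming a path with pairwise distinct
colors such that the reduced graph `G'` has a multicolored path on the `k - 1`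
colors other than `col v₁`. -/
theorem multicoloredPath_iff_branch
    {V : Type*} [Fintype V] {k : ℕ} (hk : 3 ≤ k)
    (G : SimpleGraph V) (col : V → Fin k) :
    (∃ (u w : V) (p : G.Walk u w), p.IsPath ∧ p.support.length = k ∧
        ∀ c : Fin k, ∃! x : V, x ∈ p.support ∧ col x = c) ↔
      ∃ v₁ v₂ v₃ : V, G.Adj v₁ v₂ ∧ G.Adj v₂ v₃ ∧ v₁ ≠ v₃ ∧
        col v₁ ≠ col v₂ ∧ col v₁ ≠ col v₃ ∧ col v₂ ≠ col v₃ ∧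
        ∃ (u w : _) (p : (branchGraph G col v₁ v₂ v₃).Walk u w), p.IsPath ∧
          p.support.length = k - 1 ∧
          ∀ c : Fin k, c ≠ col v₁ →
            ∃! x, x ∈ p.support ∧ col x.1 = c := by
  constructor
  · rintro ⟨u, w, p, hp, hlen, hcols⟩
    have hinj : ∀ x ∈ p.support, ∀ y ∈ p.support, col x = col y → x = y := by
      intro x hx y hy hxy
      exact (hcols (col y)).unique ⟨hx, hxy⟩ ⟨hy, rfl⟩
    cases p with
    | nil => simp at hlen; omega
    | @cons u b w h₁ p' =>
      cases p' with
      | nil => simp at hlen; omega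
      | @cons b c w h₂ q =>
        have hpt : (Walk.cons h₂ q).IsPath := hp.of_cons
        have hu_not : u ∉ (Walk.cons h₂ q).support :=
          ((Walk.cons_isPath_iff h₁ _).mp hp).2
        have hb_not : b ∉ q.support := ((Walk.cons_isPath_iff h₂ q).mp hpt).2
        have hcm : c ∈ (Walk.cons h₂ q).support := by simp
        have hbm : b ∈ (Walk.cons h₂ q).support := by simp
        have hmemp : ∀ x ∈ (Walk.cons h₂ q).support,
            x ∈ (Walk.cons h₁ (Walk.cons h₂ q)).support := by
          intro x hx; rw [Walk.support_cons]; exact List.mem_cons_of_mem _ hx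
        have hum : u ∈ (Walk.cons h₁ (Walk.cons h₂ q)).support := by simp
        have huc : u ≠ c := fun h => hu_not (h ▸ hcm)
        refine ⟨u, b, c, h₁, h₂, huc, ?_, ?_, ?_, ?_⟩
        · exact fun h => h₁.ne (hinj u hum b (hmemp b hbm) h)
        · exact fun h => huc (hinj u hum c (hmemp c hcm) h)
        · exact fun h => h₂.ne (hinj b (hmemp b hbm) c (hmemp c hcm) h)
        · have hsup : ∀ x ∈ (Walk.cons h₂ q).support, x = b ∨ x = c ∨
              (col x ≠ col u ∧ col x ≠ col b ∧ col x ≠ col c) := by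
            intro x hx
            by_cases hxb : x = b
            · exact Or.inl hxb
            by_cases hxc : x = c
            · exact Or.inr (Or.inl hxc)
            refine Or.inr (Or.inr ⟨?_, ?_, ?_⟩)
            · intro h
              exact hu_not ((hinj x (hmemp x hx) u hum h) ▸ hx)
            · exact fun h => hxb (hinj x (hmemp x hx) b (hmemp b hbm) h)
            · exact fun h => hxc (hinj x (hmemp x hx) c (hmemp c hcm) h)
          have hd : ∀ d ∈ (Walk.cons h₂ q).darts,
              (d.toProd.1 = b → d.toProd.2 = c) ∧
              (d.toProd.2 = b → d.toProd.1 = c) := by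
            intro d hd
            rw [Walk.darts_cons, List.mem_cons] at hd
            rcases hd with rfl | hd
            · exact ⟨fun _ => rfl, fun h => absurd h.symm h₂.ne⟩
            · constructor
              · intro h
                exact absurd (h ▸ Walk.dart_fst_mem_support_of_mem_darts q hd)
                  hb_not
              · intro h
                exact absurd (h ▸ Walk.dart_snd_mem_support_of_mem_darts q hd)
                  hb_not
          obtain ⟨q', hq'⟩ := liftWalk G col u b c (Walk.cons h₂ q)
            (Or.inl rfl) (hsup w (Walk.end_mem_support _)) hsup hd
          have hns : (Walk.cons h₂ q).support.Nodup := hpt.support_nodup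
          refine ⟨_, _, q', ?_, ?_, ?_⟩
          · rw [Walk.isPath_def]
            exact (hq' ▸ hns : (q'.support.map Subtype.val).Nodup).of_map
          · have := congrArg List.length hq'
            rw [List.length_map] at this
            rw [this]
            have : (Walk.cons h₁ (Walk.cons h₂ q)).support.length
                = (Walk.cons h₂ q).support.length + 1 := by
              rw [Walk.support_cons]; simp
            omega
          · intro d hd
            obtain ⟨x, ⟨hxs, hxc⟩, hxu⟩ := hcols d
            have hxu' : x ≠ u := fun h => hd (by rw [← hxc, h])
            have hxt : x ∈ (Walk.cons h₂ q).support := by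
              have := hxs
              rw [Walk.support_cons, List.mem_cons] at this
              rcases this with rfl | h
              · exact absurd rfl hxu'
              · exact h
            have : x ∈ q'.support.map Subtype.val := hq' ▸ hxt
            obtain ⟨x', hx's, hx'v⟩ := List.mem_map.mp this
            refine ⟨x', ⟨hx's, hx'v ▸ hxc⟩, ?_⟩
            rintro y' ⟨hy's, hy'c⟩
            have hy'm : y'.1 ∈ (Walk.cons h₂ q).support := by
              rw [← hq']
              exact List.mem_map.mpr ⟨y', hy's, rfl⟩
            have : y'.1 = x := hxu y'.1 ⟨hmemp _ hy'm, hy'c⟩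
            exact Subtype.ext (this.trans hx'v.symm)
  · rintro ⟨v₁, v₂, v₃, h12, h23, h13, hc12, hc13, hc23, u, w, p, hp, hlen, hcols⟩
    have key : ∀ (w' : {u : V // u = v₂ ∨ u = v₃ ∨
          (col u ≠ col v₁ ∧ col u ≠ col v₂ ∧ col u ≠ col v₃)})
        (p : (branchGraph G col v₁ v₂ v₃).Walk ⟨v₂, Or.inl rfl⟩ w'),
        p.IsPath → p.support.length = k - 1 →
        (∀ c : Fin k, c ≠ col v₁ → ∃! x, x ∈ p.support ∧ col x.1 = c) →
        (∃ (u w : V) (p : G.Walk u w), p.IsPath ∧ p.support.length = k ∧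
          ∀ c : Fin k, ∃! x : V, x ∈ p.support ∧ col x = c) := by
      clear hp hlen hcols p u w
      intro w' p hp hlen hcols
      have hNoCol1 : ∀ x ∈ p.support, col x.1 ≠ col v₁ := by
        have hsub : ({col v₁}ᶜ : Finset (Fin k)) ⊆
            (p.support.map (fun x => col x.1)).toFinset := by
          intro c hc
          obtain ⟨x, ⟨hxs, hxc⟩, _⟩ := hcols c (by simpa using hc)
          simp only [List.mem_toFinset, List.mem_map]
          exact ⟨x, hxs, hxc⟩
        have hcard : ((p.support.map (fun x => col x.1)).toFinset).card ≤ k - 1 := by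
          calc ((p.support.map (fun x => col x.1)).toFinset).card
              ≤ (p.support.map fun x => col x.1).length := List.toFinset_card_le _
            _ = k - 1 := by rw [List.length_map, hlen]
        have hcc : ({col v₁}ᶜ : Finset (Fin k)).card = k - 1 := by
          simp [Finset.card_compl]
        have heq := Finset.eq_of_subset_of_card_le hsub (by omega)
        intro x hx h
        have : col x.1 ∈ (p.support.map (fun x => col x.1)).toFinset := by
          simp only [List.mem_toFinset, List.mem_map]
          exact ⟨x, hx, rfl⟩
        rw [← heq] at this
        simp at this
        exact this h
      let f : branchGraph G col v₁ v₂ v₃ →g G := ⟨Subtype.val, fun h => h.1⟩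
      have hmap : (p.map f).support = p.support.map Subtype.val := by
        rw [Walk.support_map]; rfl
      have hpm : (p.map f).IsPath :=
        Walk.map_isPath_of_injective Subtype.val_injective hp
      have hv₁ : v₁ ∉ (p.map f).support := by
        rw [hmap]
        intro h
        obtain ⟨x, hx, hxv⟩ := List.mem_map.mp h
        exact hNoCol1 x hx (by rw [hxv])
      refine ⟨v₁, w'.1, Walk.cons h12 (p.map f), hpm.cons hv₁, ?_, ?_⟩
      · rw [Walk.support_cons, List.length_cons, hmap, List.length_map, hlen]
        omega
      · intro c
        by_cases hc : c = col v₁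
        · subst hc
          refine ⟨v₁, ⟨by simp, rfl⟩, ?_⟩
          rintro y ⟨hy, hyc⟩
          rw [Walk.support_cons, List.mem_cons] at hy
          rcases hy with rfl | hy
          · rfl
          · rw [hmap] at hy
            obtain ⟨x, hx, hxv⟩ := List.mem_map.mp hy
            exact absurd (by rw [hxv, hyc]) (hNoCol1 x hx)
        · obtain ⟨x, ⟨hxs, hxc⟩, hxu⟩ := hcols c hc
          refine ⟨x.1, ⟨?_, hxc⟩, ?_⟩
          · rw [Walk.support_cons, List.mem_cons]
            exact Or.inr (hmap ▸ List.mem_map.mpr ⟨x, hxs, rfl⟩)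
          · rintro y ⟨hy, hyc⟩
            rw [Walk.support_cons, List.mem_cons] at hy
            rcases hy with rfl | hy
            · exact (hc hyc.symm).elim
            · rw [hmap] at hy
              obtain ⟨z, hz, hzv⟩ := List.mem_map.mp hy
              rw [← hzv]
              exact congrArg Subtype.val (hxu z ⟨hz, hzv ▸ hyc⟩)
    -- v₂ is in the support and is an endpoint
    have hv₂m : (⟨v₂, Or.inl rfl⟩ : {u : V // u = v₂ ∨ u = v₃ ∨
        (col u ≠ col v₁ ∧ col u ≠ col v₂ ∧ col u ≠ col v₃)}) ∈ p.support := by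
      obtain ⟨x, ⟨hxs, hxc⟩, _⟩ := hcols (col v₂) (Ne.symm hc12)
      have : x.1 = v₂ := by
        rcases x.2 with h | h | h
        · exact h
        · exact absurd (h ▸ hxc) (Ne.symm hc23)
        · exact absurd hxc h.2.1
      have hx : x = ⟨v₂, Or.inl rfl⟩ := Subtype.ext this
      exact hx ▸ hxs
    have hnbr : ∀ y, (branchGraph G col v₁ v₂ v₃).Adj
        ⟨v₂, Or.inl rfl⟩ y → y = ⟨v₃, Or.inr (Or.inl rfl)⟩ := by
      intro y hy
      exact Subtype.ext (hy.2.1 rfl)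
    rcases path_endpoint_of_unique_nbr hnbr p hp hv₂m with h | h
    · subst h
      exact key w p hp hlen hcols
    · subst h
      refine key u p.reverse hp.reverse ?_ ?_
      · rw [Walk.support_reverse, List.length_reverse, hlen]
      · intro c hc
        obtain ⟨x, ⟨hxs, hxc⟩, hxu⟩ := hcols c hc
        refine ⟨x, ⟨by rw [Walk.support_reverse]; exact List.mem_reverse.mpr hxs, hxc⟩, ?_⟩
        rintro y ⟨hy, hyc⟩
        rw [Walk.support_reverse, List.mem_reverse] at hy
        exact hxu y ⟨hy, hyc⟩
end

section
/- Let G be a finite simple graph with a vertex coloring col : V(G) → {1,…,k}, k ≥ 2, in which all edges join differently colored vertices. For an edge {v,w} of G, let G_{{v,w}} be obtained from G by deleting all vertices of colors col(v) and col(w) and adding a new vertex v* of color col(v) adjacent to all surviving vertices of N(v) ∪ N(w). Then G contains a connected subgraph with exactly one vertex of each of the k colors if and only if there exists an edge {v,w} of G such that G_{{v,w}} contains a connected subgraph with exactly one vertex of each of the remaining k−1 colors. -/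
open SimpleGraph

/-- The graph `G_{{v,w}}` obtained from a properly `k`-colored graph `G` and an edge
`{v, w}` by deleting all vertices of colors `col v` and `col w` and adding a new
vertex `v⋆` (represented by `none`, with color `col v`) adjacent to all surviving
vertices of `N(v) ∪ N(w)`. -/
def motifGraph {V : Type*} {k : ℕ} (G : SimpleGraph V) (col : V → Fin k) (v w : V) :
    SimpleGraph (Option {u : V // col u ≠ col v ∧ col u ≠ col w}) where
  Adj a b :=
    match a, b with
    | some a, some b => G.Adj a.1 b.1
    | some a, none => G.Adj v a.1 ∨ G.Adj w a.1
    | none, some b => G.Adj v b.1 ∨ G.Adj w b.1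
    | none, none => False
  symm := ⟨by
    rintro (_ | a) (_ | b) h
    · exact h.elim
    · exact h
    · exact h
    · exact h.symm⟩
  loopless := ⟨by
    rintro (_ | a) h
    · exact h
    · exact G.irrefl h⟩

/-- Lifting reachability along a map that sends edges to reachable pairs. -/
lemma reach_lift' {α β : Type*} {G : SimpleGraph α} {H : SimpleGraph β} (f : α → β)
    (h : ∀ a b, G.Adj a b → H.Reachable (f a) (f b)) {a b : α} (hr : G.Reachable a b) :
    H.Reachable (f a) (f b) := by
  obtain ⟨p⟩ := hr
  induction p with
  | nil => exact Reachable.refl _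
  | cons ha _ ih => exact (h _ _ ha).trans ih

lemma exists_adj_of_reachable_ne' {α : Type*} {G : SimpleGraph α} {a b : α}
    (h : G.Reachable a b) (hne : a ≠ b) : ∃ c, G.Adj a c := by
  obtain ⟨p⟩ := h
  cases p with
  | nil => exact absurd rfl hne
  | cons h _ => exact ⟨_, h⟩

/-- the parameter-decreasing branching rule of Proposition 3.7 of
the paper.  Let `G` be properly `k`-colored (`k ≥ 2`).  Then `G` has a colorful
motif on all `k` colors iff there is an edge `{v, w}` of `G` such that `G_{{v,w}}`
has a colorful motif on the `k - 1` colors other than `col w` (the new vertex `v⋆`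
having color `col v`). -/
theorem colorfulMotif_iff_branch
    {V : Type*} [Fintype V] {k : ℕ} (hk : 2 ≤ k)
    (G : SimpleGraph V) (col : V → Fin k)
    (hproper : ∀ u u' : V, G.Adj u u' → col u ≠ col u') :
    (∃ X : Set V, (G.induce X).Connected ∧
        ∀ c : Fin k, ∃! u : V, u ∈ X ∧ col u = c) ↔
      ∃ v w : V, G.Adj v w ∧
        ∃ X : Set (Option {u : V // col u ≠ col v ∧ col u ≠ col w}),
          ((motifGraph G col v w).induce X).Connected ∧
          ∀ c : Fin k, c ≠ col w →
            ∃! x, x ∈ X ∧ Option.elim x (col v) (fun a => col a.1) = c := by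
  classical
  constructor
  · rintro ⟨X, hconn, hcol⟩
    -- get two vertices of different colors, hence an edge of `G[X]`
    obtain ⟨u0, ⟨hu0X, hu0c⟩, -⟩ := hcol ⟨0, by omega⟩
    obtain ⟨u1, ⟨hu1X, hu1c⟩, -⟩ := hcol ⟨1, by omega⟩
    have hne : (⟨u0, hu0X⟩ : X) ≠ ⟨u1, hu1X⟩ := by
      intro h
      have h2 : u0 = u1 := congrArg Subtype.val h
      rw [h2, hu1c] at hu0c
      exact absurd (congrArg Fin.val hu0c) (by simp)
    obtain ⟨b, hadj⟩ := exists_adj_of_reachable_ne'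
      (hconn.preconnected ⟨u0, hu0X⟩ ⟨u1, hu1X⟩) hne
    set v : V := u0 with hv
    set w : V := b.1 with hw
    have hvX : v ∈ X := hu0X
    have hwX : w ∈ X := b.2
    have hvw : G.Adj v w := hadj
    -- uniqueness of colors in X
    have uniq : ∀ u ∈ X, ∀ u' ∈ X, col u = col u' → u = u' := by
      intro u hu u' hu' hc
      obtain ⟨z, -, hz⟩ := hcol (col u')
      rw [hz u ⟨hu, hc⟩, hz u' ⟨hu', rfl⟩]
    refine ⟨v, w, hvw, ?_⟩
    -- the projection map
    let f : X → Option {u : V // col u ≠ col v ∧ col u ≠ col w} := fun u =>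
      if h : col u.1 ≠ col v ∧ col u.1 ≠ col w then some ⟨u.1, h⟩ else none
    have hfv : f ⟨v, hvX⟩ = none := by
      simp only [f]
      rw [dif_neg]
      simp
    refine ⟨Set.range f, ?_, ?_⟩
    · -- connectivity
      let f' : X → (Set.range f : Set _) := fun u => ⟨f u, u, rfl⟩
      have hstep : ∀ a b : X, (G.induce X).Adj a b →
          ((motifGraph G col v w).induce (Set.range f)).Reachable (f' a) (f' b) := by
        intro a c hac
        have hac' : G.Adj a.1 c.1 := hac
        by_cases ha : col a.1 ≠ col v ∧ col a.1 ≠ col w <;>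
          by_cases hc : col c.1 ≠ col v ∧ col c.1 ≠ col w
        · refine Adj.reachable ?_
          show (motifGraph G col v w).Adj (f a) (f c)
          simp only [f, dif_pos ha, dif_pos hc]
          exact hac'
        · -- c is v or w
          have hcvw : c.1 = v ∨ c.1 = w := by
            rcases not_and_or.mp hc with h | h
            · exact Or.inl (uniq c.1 c.2 v hvX (not_not.mp h))
            · exact Or.inr (uniq c.1 c.2 w hwX (not_not.mp h))
          refine Adj.reachable ?_
          show (motifGraph G col v w).Adj (f a) (f c)
          simp only [f, dif_pos ha, dif_neg hc]
          show G.Adj v a.1 ∨ G.Adj w a.1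
          rcases hcvw with h | h
          · exact Or.inl (h ▸ hac'.symm)
          · exact Or.inr (h ▸ hac'.symm)
        · have havw : a.1 = v ∨ a.1 = w := by
            rcases not_and_or.mp ha with h | h
            · exact Or.inl (uniq a.1 a.2 v hvX (not_not.mp h))
            · exact Or.inr (uniq a.1 a.2 w hwX (not_not.mp h))
          refine Adj.reachable ?_
          show (motifGraph G col v w).Adj (f a) (f c)
          simp only [f, dif_neg ha, dif_pos hc]
          show G.Adj v c.1 ∨ G.Adj w c.1
          rcases havw with h | h
          · exact Or.inl (h ▸ hac')
          · exact Or.inr (h ▸ hac')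
        · -- both map to none
          have heq : f' a = f' c := by
            apply Subtype.ext
            show f a = f c
            simp only [f, dif_neg ha, dif_neg hc]
          rw [heq]
      refine (connected_iff _).mpr ⟨?_, ⟨f' ⟨v, hvX⟩⟩⟩
      rintro ⟨x, a, rfl⟩ ⟨y, c, rfl⟩
      exact reach_lift' f' hstep (hconn.preconnected a c)
    · -- colorfulness
      intro c hcw
      by_cases hcv : c = col v
      · refine ⟨none, ⟨⟨⟨v, hvX⟩, hfv⟩, hcv.symm⟩, ?_⟩
        rintro (_ | ⟨u, hu1, hu2⟩) ⟨hmem, hcolx⟩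
        · rfl
        · exact absurd (hcolx.trans hcv) hu1
      · obtain ⟨u, ⟨huX, huc⟩, hu⟩ := hcol c
        have hucond : col u ≠ col v ∧ col u ≠ col w := by
          rw [huc]; exact ⟨hcv, hcw⟩
        refine ⟨some ⟨u, hucond⟩, ⟨⟨⟨u, huX⟩, ?_⟩, huc⟩, ?_⟩
        · simp only [f, dif_pos hucond]
        · rintro (_ | ⟨u', hu'1, hu'2⟩) ⟨hmem, hcolx⟩
          · exact absurd (show col v = c from hcolx).symm hcv
          · obtain ⟨a, ha⟩ := hmem
            have haa : a.1 = u' := by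
              by_cases h : col a.1 ≠ col v ∧ col a.1 ≠ col w
              · simp only [f, dif_pos h] at ha
                exact congrArg Subtype.val (Option.some.inj ha)
              · simp only [f, dif_neg h] at ha
                exact absurd ha (by simp)
            have hu'u : u' = u := hu u' ⟨haa ▸ a.2, hcolx⟩
            simp [hu'u]
  · rintro ⟨v, w, hvw, X', hconn', hcol'⟩
    have hcvw : col v ≠ col w := hproper _ _ hvw
    -- `none` is in X'
    obtain ⟨x0, ⟨hx0m, hx0c⟩, -⟩ := hcol' (col v) hcvw
    have hnone : (none : Option {u : V // col u ≠ col v ∧ col u ≠ col w}) ∈ X' := by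
      cases x0 with
      | none => exact hx0m
      | some a => exact absurd hx0c a.2.1
    -- the motif in G
    refine ⟨{u | u = v ∨ u = w ∨ ∃ h : col u ≠ col v ∧ col u ≠ col w, some ⟨u, h⟩ ∈ X'},
      ?_, ?_⟩
    · set X : Set V :=
        {u | u = v ∨ u = w ∨ ∃ h : col u ≠ col v ∧ col u ≠ col w, some ⟨u, h⟩ ∈ X'} with hX
      have hvX : v ∈ X := Or.inl rfl
      have hwX : w ∈ X := Or.inr (Or.inl rfl)
      let g : X' → X := fun x =>
        match x with
        | ⟨none, _⟩ => ⟨v, hvX⟩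
        | ⟨some a, hm⟩ => ⟨a.1, Or.inr (Or.inr ⟨a.2, hm⟩)⟩
      have hwv : (G.induce X).Adj ⟨w, hwX⟩ ⟨v, hvX⟩ := hvw.symm
      have hstep : ∀ x y : X', ((motifGraph G col v w).induce X').Adj x y →
          (G.induce X).Reachable (g x) (g y) := by
        rintro ⟨(_ | a), hx⟩ ⟨(_ | c), hy⟩ hxy
        · exact absurd hxy (by exact id)
        · have hcX : c.1 ∈ X := Or.inr (Or.inr ⟨c.2, hy⟩)
          rcases (hxy : G.Adj v c.1 ∨ G.Adj w c.1) with h | h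
          · exact Adj.reachable (show (G.induce X).Adj ⟨v, hvX⟩ ⟨c.1, hcX⟩ from h)
          · exact hwv.symm.reachable.trans
              (Adj.reachable (show (G.induce X).Adj ⟨w, hwX⟩ ⟨c.1, hcX⟩ from h))
        · have haX : a.1 ∈ X := Or.inr (Or.inr ⟨a.2, hx⟩)
          rcases (hxy : G.Adj v a.1 ∨ G.Adj w a.1) with h | h
          · exact Adj.reachable
              (show (G.induce X).Adj ⟨a.1, haX⟩ ⟨v, hvX⟩ from h.symm)
          · exact (Adj.reachable
              (show (G.induce X).Adj ⟨a.1, haX⟩ ⟨w, hwX⟩ from h.symm)).trans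
              hwv.reachable
        · have haX : a.1 ∈ X := Or.inr (Or.inr ⟨a.2, hx⟩)
          have hcX : c.1 ∈ X := Or.inr (Or.inr ⟨c.2, hy⟩)
          exact Adj.reachable
            (show (G.induce X).Adj ⟨a.1, haX⟩ ⟨c.1, hcX⟩ from hxy)
      have key : ∀ x : X, (G.induce X).Reachable x ⟨v, hvX⟩ := by
        rintro ⟨u, hu⟩
        rcases hu with rfl | rfl | ⟨h, hm⟩
        · exact Reachable.refl _
        · exact Adj.reachable hwv
        · exact reach_lift' g hstep
            (hconn'.preconnected ⟨some ⟨u, h⟩, hm⟩ ⟨none, hnone⟩)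
      refine (connected_iff _).mpr ⟨fun x y => (key x).trans (key y).symm, ⟨⟨v, hvX⟩⟩⟩
    · intro c
      by_cases hcv : c = col v
      · refine ⟨v, ⟨Or.inl rfl, hcv.symm⟩, ?_⟩
        rintro u ⟨(rfl | rfl | ⟨h, hm⟩), hcu⟩
        · rfl
        · exact absurd (hcu.trans hcv) hcvw.symm
        · exact absurd (hcu.trans hcv) h.1
      · by_cases hcw : c = col w
        · refine ⟨w, ⟨Or.inr (Or.inl rfl), hcw.symm⟩, ?_⟩
          rintro u ⟨(rfl | rfl | ⟨h, hm⟩), hcu⟩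
          · exact absurd (hcu.trans hcw) hcvw
          · rfl
          · exact absurd (hcu.trans hcw) h.2
        · obtain ⟨x, ⟨hxm, hxc⟩, hx⟩ := hcol' c hcw
          cases x with
          | none => exact absurd hxc (Ne.symm hcv)
          | some a =>
            refine ⟨a.1, ⟨Or.inr (Or.inr ⟨a.2, hxm⟩), hxc⟩, ?_⟩
            rintro u ⟨(rfl | rfl | ⟨h, hm⟩), hcu⟩
            · exact absurd hcu.symm hcv
            · exact absurd hcu.symm hcw
            · have hxeq := hx (some ⟨u, h⟩) ⟨hm, hcu⟩
              exact congrArg (fun y => (Option.elim y v fun b => b.1)) hxeq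
end
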